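/- arXiv:1708.08517 — 4 statements merged into one kernel-verified Lean document; each statement's English description precedes it below -/
import Mathlib

section
/- Let p₀, p₁ ∈ ℝ, let ω ∈ {1, −1}, v > 0, Z ∈ ℂ \ {0}, λ ∈ ℂ, ŵ ∈ ℂ, and set τ := λ/(2πv), D_ω := −i·p₀ + ω·v·p₁ and D_{−ω} := −i·p₀ − ω·v·p₁. Suppose N : {↑,↓} × {↑,↓} → ℂ satisfies, for all σ, σ' ∈ {↑,↓}: D_ω · N(σ,σ') = −δ_{σσ'}·(1/(4πvZ²))·D_{−ω} + (1/(4πv))·D_{−ω}·ŵ·λ·(N(↑,σ') + N(↓,σ')), where δ_{σσ'} is 1 if σ = σ' and 0 otherwise. Define N^c := N(↑,↑) + N(↑,↓) + N(↓,↑) + N(↓,↓) and N^s := N(↑,↑) − N(↑,↓) − N(↓,↑) + N(↓,↓). Then: (i) (D_ω − τ·ŵ·D_{−ω})·N^c = −(1/(2πvZ²))·D_{−ω}; (ii) D_ω · N^s = −(1/(2πvZ²))·D_{−ω}. Moreover, if 1 − τŵ ≠ 0, then (i) is equivalent to D̃_ω · N^c = −(1/(2πvZ²))·D_{−ω}/(1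 − τŵ), where D̃_ω := −i·p₀ + ω·v·((1 + τŵ)/(1 − τŵ))·p₁. -/
/-!
Write the Ward identity as `D N(σ,σ') = -δ_{σσ'} a E + b E N_{•σ'}` with column sums
`N_{•σ'} = N(↑,σ') + N(↓,σ')`. Summing over `σ` gives `(D - 2bE) N_{•σ'} = -aE`, and summing
over `σ'` gives the charge identity. The interaction term depends on `σ'` only, so it cancels in
the spin combination `N^s = Σ_{σ'} ±(N(↑,σ') - N(↓,σ'))`, where only the free term survives.
The dressed form comes from regrouping `D_ω - tD_{-ω} = (1 - t)(-ip₀) + (1 + t)ωvp₁`.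
-/

section WardIdentity

variable {R : Type*} [CommRing R]

def chargeCorrelation (N : Bool → Bool → R) : R :=
  N true true + N true false + N false true + N false false

def spinCorrelation (N : Bool → Bool → R) : R :=
  N true true - N true false - N false true + N false false

variable {D E a b : R} {N : Bool → Bool → R}

theorem chargeCorrelation_eq_of_ward
    (hN : ∀ σ σ', D * N σ σ' =
      -(if σ = σ' then (1 : R) else 0) * a * E + b * E * (N true σ' + N false σ')) :
    (D - 2 * b * E) * chargeCorrelation N = -(2 * a) * E := by
  have htt := hN true true
  have htf := hN true false
  have hft := hN false true
  have hff := hN false false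
  simp only [if_true, Bool.true_eq_false, Bool.false_eq_true, if_false] at htt htf hft hff
  unfold chargeCorrelation
  linear_combination htt + htf + hft + hff

theorem spinCorrelation_eq_of_ward
    (hN : ∀ σ σ', D * N σ σ' =
      -(if σ = σ' then (1 : R) else 0) * a * E + b * E * (N true σ' + N false σ')) :
    D * spinCorrelation N = -(2 * a) * E := by
  have htt := hN true true
  have htf := hN true false
  have hft := hN false true
  have hff := hN false false
  simp only [if_true, Bool.true_eq_false, Bool.false_eq_true, if_false] at htt htf hft hff
  unfold spinCorrelation
  linear_combination htt - htf - hft + hff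

end WardIdentity

section DressedSymbol

variable {K : Type*} [Field K]

theorem add_sub_mul_sub_eq_one_sub_mul_dressed (x c p t : K) (ht : 1 - t ≠ 0) :
    (x + c * p) - t * (x - c * p) = (1 - t) * (x + c * ((1 + t) / (1 - t)) * p) := by
  field_simp
  ring

theorem add_sub_mul_sub_mul_eq_iff_dressed (x c p t S Q : K) (ht : 1 - t ≠ 0) :
    ((x + c * p) - t * (x - c * p)) * S = Q ↔
      (x + c * ((1 + t) / (1 - t)) * p) * S = Q / (1 - t) := by
  rw [add_sub_mul_sub_eq_one_sub_mul_dressed x c p t ht, eq_div_iff ht, mul_assoc, mul_comm]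

end DressedSymbol

theorem anomalous_ward_to_density_correlations_general
    (p₀ p₁ : ℝ) (ω : ℝ) (v : ℝ)
    (Z : ℂ) (lam w : ℂ) (Nf : Bool → Bool → ℂ)
    (hWI : ∀ σ σ' : Bool,
      (-Complex.I * (p₀ : ℂ) + (ω : ℂ) * (v : ℂ) * (p₁ : ℂ)) * Nf σ σ' =
        -(if σ = σ' then (1 : ℂ) else 0) * (1 / (4 * (Real.pi : ℂ) * (v : ℂ) * Z ^ 2)) *
            (-Complex.I * (p₀ : ℂ) - (ω : ℂ) * (v : ℂ) * (p₁ : ℂ))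
          + (1 / (4 * (Real.pi : ℂ) * (v : ℂ))) *
              (-Complex.I * (p₀ : ℂ) - (ω : ℂ) * (v : ℂ) * (p₁ : ℂ)) * w * lam *
              (Nf true σ' + Nf false σ')) :
    (((-Complex.I * (p₀ : ℂ) + (ω : ℂ) * (v : ℂ) * (p₁ : ℂ))
          - (lam / (2 * (Real.pi : ℂ) * (v : ℂ))) * w *
              (-Complex.I * (p₀ : ℂ) - (ω : ℂ) * (v : ℂ) * (p₁ : ℂ))) *
        (Nf true true + Nf true false + Nf false true + Nf false false)
      = -(1 / (2 * (Real.pi : ℂ) * (v : ℂ) * Z ^ 2)) *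
          (-Complex.I * (p₀ : ℂ) - (ω : ℂ) * (v : ℂ) * (p₁ : ℂ))) ∧
    ((-Complex.I * (p₀ : ℂ) + (ω : ℂ) * (v : ℂ) * (p₁ : ℂ)) *
        (Nf true true - Nf true false - Nf false true + Nf false false)
      = -(1 / (2 * (Real.pi : ℂ) * (v : ℂ) * Z ^ 2)) *
          (-Complex.I * (p₀ : ℂ) - (ω : ℂ) * (v : ℂ) * (p₁ : ℂ))) ∧
    (1 - (lam / (2 * (Real.pi : ℂ) * (v : ℂ))) * w ≠ 0 →
      ((((-Complex.I * (p₀ : ℂ) + (ω : ℂ) * (v : ℂ) * (p₁ : ℂ))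
            - (lam / (2 * (Real.pi : ℂ) * (v : ℂ))) * w *
                (-Complex.I * (p₀ : ℂ) - (ω : ℂ) * (v : ℂ) * (p₁ : ℂ))) *
          (Nf true true + Nf true false + Nf false true + Nf false false)
        = -(1 / (2 * (Real.pi : ℂ) * (v : ℂ) * Z ^ 2)) *
            (-Complex.I * (p₀ : ℂ) - (ω : ℂ) * (v : ℂ) * (p₁ : ℂ))) ↔
       ((-Complex.I * (p₀ : ℂ) + (ω : ℂ) * (v : ℂ) *
            ((1 + (lam / (2 * (Real.pi : ℂ) * (v : ℂ))) * w) /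
              (1 - (lam / (2 * (Real.pi : ℂ) * (v : ℂ))) * w)) * (p₁ : ℂ)) *
          (Nf true true + Nf true false + Nf false true + Nf false false)
        = -(1 / (2 * (Real.pi : ℂ) * (v : ℂ) * Z ^ 2)) *
            (-Complex.I * (p₀ : ℂ) - (ω : ℂ) * (v : ℂ) * (p₁ : ℂ)) /
            (1 - (lam / (2 * (Real.pi : ℂ) * (v : ℂ))) * w)))) := by
  set D := -Complex.I * (p₀ : ℂ) + (ω : ℂ) * (v : ℂ) * (p₁ : ℂ)
  set E := -Complex.I * (p₀ : ℂ) - (ω : ℂ) * (v : ℂ) * (p₁ : ℂ)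
  have hN : ∀ σ σ', D * Nf σ σ' =
      -(if σ = σ' then (1 : ℂ) else 0) * (1 / (4 * (Real.pi : ℂ) * v * Z ^ 2)) * E +
        (1 / (4 * (Real.pi : ℂ) * v) * w * lam) * E * (Nf true σ' + Nf false σ') :=
    fun σ σ' => by rw [hWI]; ring
  have hcoupling : 2 * (1 / (4 * (Real.pi : ℂ) * v) * w * lam) = lam / (2 * Real.pi * v) * w := by
    ring
  have hfree : 2 * (1 / (4 * (Real.pi : ℂ) * v * Z ^ 2)) = 1 / (2 * Real.pi * v * Z ^ 2) := by
    ring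
  have hcharge := chargeCorrelation_eq_of_ward hN
  have hspin := spinCorrelation_eq_of_ward hN
  rw [hcoupling, hfree] at hcharge
  rw [hfree] at hspin
  exact ⟨hcharge, hspin, fun ht => add_sub_mul_sub_mul_eq_iff_dressed _ _ _ _ _ _ ht⟩

/-- **From the anomalous Ward identity to the charge/spin density–density correlations.**
Spins are indexed by `Bool` (`true = ↑`, `false = ↓`). If the density–density correlations
`N σ σ'` satisfy the anomalous Ward identity, then the charge combination `N^c` satisfies
`(D_ω - τŵD_{-ω}) N^c = -(1/(2πvZ²)) D_{-ω}`, the spin combination `N^s` satisfies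
`D_ω N^s = -(1/(2πvZ²)) D_{-ω}`, and, when `1 - τŵ ≠ 0`, the former is equivalent to
`D̃_ω N^c = -(1/(2πvZ²)) D_{-ω}/(1 - τŵ)` with the dressed symbol `D̃_ω`. -/
theorem anomalous_ward_to_density_correlations
    (p₀ p₁ : ℝ) (ω : ℝ) (hω : ω = 1 ∨ ω = -1) (v : ℝ) (hv : 0 < v)
    (Z : ℂ) (hZ : Z ≠ 0) (lam w : ℂ) (Nf : Bool → Bool → ℂ)
    (hWI : ∀ σ σ' : Bool,
      (-Complex.I * (p₀ : ℂ) + (ω : ℂ) * (v : ℂ) * (p₁ : ℂ)) * Nf σ σ' =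
        -(if σ = σ' then (1 : ℂ) else 0) * (1 / (4 * (Real.pi : ℂ) * (v : ℂ) * Z ^ 2)) *
            (-Complex.I * (p₀ : ℂ) - (ω : ℂ) * (v : ℂ) * (p₁ : ℂ))
          + (1 / (4 * (Real.pi : ℂ) * (v : ℂ))) *
              (-Complex.I * (p₀ : ℂ) - (ω : ℂ) * (v : ℂ) * (p₁ : ℂ)) * w * lam *
              (Nf true σ' + Nf false σ')) :
    (((-Complex.I * (p₀ : ℂ) + (ω : ℂ) * (v : ℂ) * (p₁ : ℂ))
          - (lam / (2 * (Real.pi : ℂ) * (v : ℂ))) * w *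
              (-Complex.I * (p₀ : ℂ) - (ω : ℂ) * (v : ℂ) * (p₁ : ℂ))) *
        (Nf true true + Nf true false + Nf false true + Nf false false)
      = -(1 / (2 * (Real.pi : ℂ) * (v : ℂ) * Z ^ 2)) *
          (-Complex.I * (p₀ : ℂ) - (ω : ℂ) * (v : ℂ) * (p₁ : ℂ))) ∧
    ((-Complex.I * (p₀ : ℂ) + (ω : ℂ) * (v : ℂ) * (p₁ : ℂ)) *
        (Nf true true - Nf true false - Nf false true + Nf false false)
      = -(1 / (2 * (Real.pi : ℂ) * (v : ℂ) * Z ^ 2)) *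
          (-Complex.I * (p₀ : ℂ) - (ω : ℂ) * (v : ℂ) * (p₁ : ℂ))) ∧
    (1 - (lam / (2 * (Real.pi : ℂ) * (v : ℂ))) * w ≠ 0 →
      ((((-Complex.I * (p₀ : ℂ) + (ω : ℂ) * (v : ℂ) * (p₁ : ℂ))
            - (lam / (2 * (Real.pi : ℂ) * (v : ℂ))) * w *
                (-Complex.I * (p₀ : ℂ) - (ω : ℂ) * (v : ℂ) * (p₁ : ℂ))) *
          (Nf true true + Nf true false + Nf false true + Nf false false)
        = -(1 / (2 * (Real.pi : ℂ) * (v : ℂ) * Z ^ 2)) *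
            (-Complex.I * (p₀ : ℂ) - (ω : ℂ) * (v : ℂ) * (p₁ : ℂ))) ↔
       ((-Complex.I * (p₀ : ℂ) + (ω : ℂ) * (v : ℂ) *
            ((1 + (lam / (2 * (Real.pi : ℂ) * (v : ℂ))) * w) /
              (1 - (lam / (2 * (Real.pi : ℂ) * (v : ℂ))) * w)) * (p₁ : ℂ)) *
          (Nf true true + Nf true false + Nf false true + Nf false false)
        = -(1 / (2 * (Real.pi : ℂ) * (v : ℂ) * Z ^ 2)) *
            (-Complex.I * (p₀ : ℂ) - (ω : ℂ) * (v : ℂ) * (p₁ : ℂ)) /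
            (1 - (lam / (2 * (Real.pi : ℂ) * (v : ℂ))) * w)))) :=
  anomalous_ward_to_density_correlations_general p₀ p₁ ω v Z lam w Nf hWI
end

section
/- Let ω ∈ {1, −1}, v_s > 0, v_c > 0, λ, X₀, X₁, A₀, A₁ ∈ ℂ, and ε > 0. For p = (p₀,p₁) ∈ ℝ² \ {(0,0)} define F(p) := λ·(−i p₀ − ω v_s p₁)/(−i p₀ + ω v_c p₁) (the denominator is nonzero for real p ≠ 0), and define η₀(p) := i and η₁(p) := (1 − e^{i p₁})/(−i p₁) for p₁ ≠ 0, η₁(p) := 1 for p₁ = 0. Suppose R₀, R₁ : ℝ² → ℂ are continuous at (0,0) with R₀(0,0) = R₁(0,0) = 0, and that for all p with 0 < ‖p‖ < ε: η₀(p)·p₀·(X₀·F(p) + A₀ + R₀(p)) + η₁(p)·p₁·(X₁·F(p) + A₁ + R₁(p)) = 0. Then A₀ = −λ·X₀ and A₁ = λ·(v_s/v_c)·X₁. -/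
/-!
Restricting the Ward identity to the time axis `p = (t, 0)` kills the `η₁` term and makes
`F ≡ λ`, so `λX₀ + A₀ = -R₀(t, 0)` for every small `t ≠ 0`; letting `t → 0` gives
`A₀ = -λX₀`. On the space axis `p = (0, t)` the `η₀` term vanishes, `F ≡ -λ v_s / v_c` and
`η₁(0, t) ≠ 0` for `0 < t < 2π`, so `A₁ - λ(v_s/v_c)X₁ = -R₁(0, t)` and `t → 0⁺` concludes.
-/

open Complex Filter Topology

/-- The correlation `F(p)` of the reference model. -/
noncomputable def refCorrelation (lam : ℂ) (ω vs vc : ℝ) (p : ℝ × ℝ) : ℂ :=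
  lam * ((-I * p.1 - ω * vs * p.2) / (-I * p.1 + ω * vc * p.2))

/-- The symbol `η₁(p)` of the lattice space difference operator. -/
noncomputable def latticeEta₁ (p : ℝ × ℝ) : ℂ :=
  if p.2 = 0 then 1 else (1 - exp (I * p.2)) / (-I * p.2)

lemma refCorrelation_time_axis (lam : ℂ) (ω vs vc : ℝ) {t : ℝ} (ht : t ≠ 0) :
    refCorrelation lam ω vs vc (t, 0) = lam := by
  have : I * (t : ℂ) ≠ 0 := by simp [ht]
  simp [refCorrelation, div_self this]

lemma refCorrelation_space_axis (lam : ℂ) {ω : ℝ} (hω : ω ≠ 0) (vs : ℝ) {vc : ℝ} (hvc : vc ≠ 0)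
    {t : ℝ} (ht : t ≠ 0) : refCorrelation lam ω vs vc (0, t) = -lam * ((vs / vc : ℝ) : ℂ) := by
  have hωC : (ω : ℂ) ≠ 0 := ofReal_ne_zero.2 hω
  have hvcC : (vc : ℂ) ≠ 0 := ofReal_ne_zero.2 hvc
  have htC : (t : ℂ) ≠ 0 := ofReal_ne_zero.2 ht
  simp only [refCorrelation, ofReal_zero, mul_zero, zero_sub, zero_add, ofReal_div]
  field_simp

lemma latticeEta₁_time_axis (t : ℝ) : latticeEta₁ (t, 0) = 1 := if_pos rfl

lemma exp_I_mul_ofReal_ne_one {t : ℝ} (h0 : 0 < t) (h2π : t < 2 * Real.pi) :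
    exp (I * t) ≠ 1 := by
  have hsin : 0 < Real.sin (t / 2) := Real.sin_pos_of_pos_of_lt_pi (by positivity) (by linarith)
  rw [← sub_ne_zero, ← norm_pos_iff, norm_exp_I_mul_ofReal_sub_one, Real.norm_eq_abs]
  positivity

lemma latticeEta₁_space_axis_ne_zero {t : ℝ} (h0 : 0 < t) (h2π : t < 2 * Real.pi) :
    latticeEta₁ (0, t) ≠ 0 := by
  have hexp := sub_ne_zero.2 (exp_I_mul_ofReal_ne_one h0 h2π).symm
  simp [latticeEta₁, h0.ne', hexp]

lemma tendsto_prodMk_zero_right_nhdsNE {X Y : Type*} [TopologicalSpace X] [TopologicalSpace Y]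
    [Zero X] [Zero Y] : Tendsto (fun x : X => (x, (0 : Y))) (𝓝[≠] 0) (𝓝[≠] 0) :=
  tendsto_nhdsWithin_iff.2
    ⟨((continuous_id.prodMk continuous_const).tendsto' 0 0 rfl).mono_left nhdsWithin_le_nhds,
      eventually_nhdsWithin_of_forall fun _ hx => by simpa using hx⟩

lemma tendsto_prodMk_zero_left_nhdsNE {X Y : Type*} [TopologicalSpace X] [TopologicalSpace Y]
    [Zero X] [Zero Y] : Tendsto (fun y : Y => ((0 : X), y)) (𝓝[≠] 0) (𝓝[≠] 0) :=
  tendsto_nhdsWithin_iff.2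
    ⟨((continuous_const.prodMk continuous_id).tendsto' 0 0 rfl).mono_left nhdsWithin_le_nhds,
      eventually_nhdsWithin_of_forall fun _ hy => by simpa using hy⟩

lemma eq_zero_of_eventually_mul_add_eq_zero {α M : Type*} [Semiring M] [NoZeroDivisors M]
    [TopologicalSpace M] [ContinuousAdd M] [T2Space M] {l : Filter α} [l.NeBot] {a f : α → M}
    {c : M} (hf : Tendsto f l (𝓝 0)) (ha : ∀ᶠ x in l, a x ≠ 0)
    (h : ∀ᶠ x in l, a x * (c + f x) = 0) : c = 0 := by
  have hsum : ∀ᶠ x in l, c + f x = 0 :=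
    (ha.and h).mono fun _ hx => (mul_eq_zero.1 hx.2).resolve_left hx.1
  simpa using tendsto_nhds_unique (hf.const_add c) (tendsto_const_nhds.congr' (hsum.mono
    fun _ hx => hx.symm))

theorem schwinger_terms_from_ward_identity_general
    (ω : ℝ) (hω : ω = 1 ∨ ω = -1) (vs vc : ℝ) (hvc : 0 < vc)
    (lam X₀ X₁ A₀ A₁ : ℂ) (ε : ℝ) (hε : 0 < ε)
    (R₀ R₁ : ℝ × ℝ → ℂ)
    (hR₀c : ContinuousAt R₀ 0) (hR₀0 : R₀ 0 = 0)
    (hR₁c : ContinuousAt R₁ 0) (hR₁0 : R₁ 0 = 0)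
    (hWI : ∀ p : ℝ × ℝ, 0 < ‖p‖ → ‖p‖ < ε →
      Complex.I * (p.1 : ℂ) *
          (X₀ * (lam * ((-Complex.I * (p.1 : ℂ) - (ω : ℂ) * (vs : ℂ) * (p.2 : ℂ)) /
              (-Complex.I * (p.1 : ℂ) + (ω : ℂ) * (vc : ℂ) * (p.2 : ℂ)))) + A₀ + R₀ p)
        + (if p.2 = 0 then (1 : ℂ)
            else (1 - Complex.exp (Complex.I * (p.2 : ℂ))) / (-Complex.I * (p.2 : ℂ))) *
            (p.2 : ℂ) *
          (X₁ * (lam * ((-Complex.I * (p.1 : ℂ) - (ω : ℂ) * (vs : ℂ) * (p.2 : ℂ)) /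
              (-Complex.I * (p.1 : ℂ) + (ω : ℂ) * (vc : ℂ) * (p.2 : ℂ)))) + A₁ + R₁ p)
        = 0) :
    A₀ = -lam * X₀ ∧ A₁ = lam * ((vs / vc : ℝ) : ℂ) * X₁ := by
  have hω0 : ω ≠ 0 := by rcases hω with rfl | rfl <;> norm_num
  have ward : ∀ᶠ p in 𝓝[≠] (0 : ℝ × ℝ), I * p.1 * (X₀ * refCorrelation lam ω vs vc p + A₀ + R₀ p) +
      latticeEta₁ p * p.2 * (X₁ * refCorrelation lam ω vs vc p + A₁ + R₁ p) = 0 := by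
    filter_upwards [self_mem_nhdsWithin, nhdsWithin_le_nhds (Metric.ball_mem_nhds 0 hε)]
      with p hp0 hpε
    exact hWI p (norm_pos_iff.2 hp0) (mem_ball_zero_iff.1 hpε)
  have hR₀ : Tendsto R₀ (𝓝[≠] 0) (𝓝 0) := hR₀0 ▸ hR₀c.tendsto.mono_left nhdsWithin_le_nhds
  have hR₁ : Tendsto R₁ (𝓝[≠] 0) (𝓝 0) := hR₁0 ▸ hR₁c.tendsto.mono_left nhdsWithin_le_nhds
  constructor
  · have time_axis : ∀ᶠ t : ℝ in 𝓝[≠] 0, I * (t : ℂ) * (lam * X₀ + A₀ + R₀ (t, 0)) = 0 := by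
      filter_upwards [tendsto_prodMk_zero_right_nhdsNE.eventually ward, self_mem_nhdsWithin]
        with t ht ht0
      simpa [refCorrelation_time_axis _ _ _ _ ht0, latticeEta₁_time_axis, mul_comm X₀] using ht
    have hI : ∀ᶠ t : ℝ in 𝓝[≠] 0, I * (t : ℂ) ≠ 0 :=
      eventually_nhdsWithin_of_forall fun t ht => by simpa using ht
    linear_combination eq_zero_of_eventually_mul_add_eq_zero
      (hR₀.comp tendsto_prodMk_zero_right_nhdsNE) hI time_axis
  · have hpos : Tendsto (fun t : ℝ => ((0 : ℝ), t)) (𝓝[>] 0) (𝓝[≠] 0) :=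
      tendsto_prodMk_zero_left_nhdsNE.mono_left (nhdsWithin_mono _ fun _ ht => ne_of_gt ht)
    have small : ∀ᶠ t in 𝓝[>] (0 : ℝ), 0 < t ∧ t < 2 * Real.pi :=
      Ioo_mem_nhdsGT Real.two_pi_pos
    have space_axis : ∀ᶠ t : ℝ in 𝓝[>] 0,
        latticeEta₁ (0, t) * (t : ℂ) * (A₁ - lam * ((vs / vc : ℝ) : ℂ) * X₁ + R₁ (0, t)) = 0 := by
      filter_upwards [hpos.eventually ward, small] with t ht hsmall
      rw [refCorrelation_space_axis lam hω0 vs hvc.ne' hsmall.1.ne', ofReal_zero, mul_zero,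
        zero_mul, zero_add] at ht
      linear_combination ht
    have hη : ∀ᶠ t : ℝ in 𝓝[>] 0, latticeEta₁ (0, t) * (t : ℂ) ≠ 0 :=
      small.mono fun _ ht =>
        mul_ne_zero (latticeEta₁_space_axis_ne_zero ht.1 ht.2) (ofReal_ne_zero.2 ht.1.ne')
    linear_combination eq_zero_of_eventually_mul_add_eq_zero (hR₁.comp hpos) hη space_axis

/-- **Determination of the Schwinger terms from the Ward identity.** Suppose the lattice
Ward identity `η₀(p)p₀(X₀F(p) + A₀ + R₀(p)) + η₁(p)p₁(X₁F(p) + A₁ + R₁(p)) = 0` holds for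
all small nonzero `p`, where `F(p) = λ(-ip₀ - ωv_s p₁)/(-ip₀ + ωv_c p₁)`, `η₀ = i`,
`η₁(p) = (1 - e^{ip₁})/(-ip₁)` (`= 1` at `p₁ = 0`), and `R₀, R₁` are continuous and vanish
at `0`. Then `A₀ = -λX₀` and `A₁ = λ(v_s/v_c)X₁`. -/
theorem schwinger_terms_from_ward_identity
    (ω : ℝ) (hω : ω = 1 ∨ ω = -1) (vs vc : ℝ) (hvs : 0 < vs) (hvc : 0 < vc)
    (lam X₀ X₁ A₀ A₁ : ℂ) (ε : ℝ) (hε : 0 < ε)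
    (R₀ R₁ : ℝ × ℝ → ℂ)
    (hR₀c : ContinuousAt R₀ 0) (hR₀0 : R₀ 0 = 0)
    (hR₁c : ContinuousAt R₁ 0) (hR₁0 : R₁ 0 = 0)
    (hWI : ∀ p : ℝ × ℝ, 0 < ‖p‖ → ‖p‖ < ε →
      Complex.I * (p.1 : ℂ) *
          (X₀ * (lam * ((-Complex.I * (p.1 : ℂ) - (ω : ℂ) * (vs : ℂ) * (p.2 : ℂ)) /
              (-Complex.I * (p.1 : ℂ) + (ω : ℂ) * (vc : ℂ) * (p.2 : ℂ)))) + A₀ + R₀ p)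
        + (if p.2 = 0 then (1 : ℂ)
            else (1 - Complex.exp (Complex.I * (p.2 : ℂ))) / (-Complex.I * (p.2 : ℂ))) *
            (p.2 : ℂ) *
          (X₁ * (lam * ((-Complex.I * (p.1 : ℂ) - (ω : ℂ) * (vs : ℂ) * (p.2 : ℂ)) /
              (-Complex.I * (p.1 : ℂ) + (ω : ℂ) * (vc : ℂ) * (p.2 : ℂ)))) + A₁ + R₁ p)
        = 0) :
    A₀ = -lam * X₀ ∧ A₁ = lam * ((vs / vc : ℝ) : ℂ) * X₁ :=
  schwinger_terms_from_ward_identity_general ω hω vs vc hvc lam X₀ X₁ A₀ A₁ ε hε R₀ R₁ hR₀c hR₀0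
    hR₁c hR₁0 hWI
end

section
/- Let θ > 0, let h ≤ 0 be an integer, let K ≥ 0, and let b : ℤ → ℂ satisfy |b_j| ≤ K·2^{θ j} for all integers j with h ≤ j ≤ 0. Then there exists ν₀ ∈ ℂ with |ν₀| ≤ K such that the backward recursion ν_k = 2·ν_{k+1} + b_{k+1} (for integers h ≤ k ≤ −1), with this initial datum ν₀, produces a sequence satisfying |ν_k| ≤ K·2^{θ k} for all h ≤ k ≤ 0. (Explicitly, one may take ν₀ = −Σ_{j=h+1}^{0} 2^{j−1}·b_j, for which ν_k = −Σ_{j=h+1}^{k} 2^{j−k−1}·b_j.) -/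
/-!
Solve the recursion `ν_k = 2 ν_{k+1} + b_{k+1}` from the infrared end, starting at `ν_h = 0`:
read forwards it is `ν_{k+1} = (ν_k - b_{k+1}) / 2`, which is contracting, so a bound
`|b_j| ≤ M_j` with `M` nondecreasing propagates to `|ν_k| ≤ (M_{k-1} + M_k) / 2 ≤ M_k`.
The fine-tuned datum `ν_0` is the value of this solution at scale `0`.
-/

open Finset

/-- The solution of `ν_k = 2 ν_{k+1} + b_{k+1}` with `ν_h = 0`. -/
noncomputable def fineTunedFlow {𝕜 : Type*} [Field 𝕜] (b : ℤ → 𝕜) (h k : ℤ) : 𝕜 :=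
  -∑ j ∈ Icc (h + 1) k, (2 : 𝕜) ^ (j - k - 1) * b j

section Flow

variable {𝕜 : Type*} [Field 𝕜] (b : ℤ → 𝕜) (h : ℤ)

@[simp]
theorem fineTunedFlow_self : fineTunedFlow b h h = 0 := by
  simp [fineTunedFlow]

theorem fineTunedFlow_eq_two_mul_succ_add [NeZero (2 : 𝕜)] {k : ℤ} (hk : h ≤ k) :
    fineTunedFlow b h k = 2 * fineTunedFlow b h (k + 1) + b (k + 1) := by
  have hIcc : Icc (h + 1) (k + 1) = insert (k + 1) (Icc (h + 1) k) := by
    ext j; simp only [mem_Icc, mem_insert]; omega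
  have hterm : ∀ j ∈ Icc (h + 1) k,
      2 * ((2 : 𝕜) ^ (j - (k + 1) - 1) * b j) = (2 : 𝕜) ^ (j - k - 1) * b j := by
    intro j _
    rw [show j - k - 1 = j - (k + 1) - 1 + 1 by ring, zpow_add_one₀ two_ne_zero]
    ring
  have hlast : 2 * ((2 : 𝕜) ^ (k + 1 - (k + 1) - 1) * b (k + 1)) = b (k + 1) := by
    rw [sub_self, zero_sub, zpow_neg_one, ← mul_assoc, mul_inv_cancel₀ two_ne_zero, one_mul]
  rw [fineTunedFlow, fineTunedFlow, hIcc, sum_insert (by simp), mul_neg, mul_add, mul_sum,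
    sum_congr rfl hterm, hlast]
  ring

end Flow

theorem norm_le_of_eq_two_mul_succ_add {𝕜 : Type*} [RCLike 𝕜] {ν b : ℤ → 𝕜} {M : ℤ → ℝ}
    (hM : Monotone M) {h N : ℤ} (hν : ‖ν h‖ ≤ M h)
    (hrec : ∀ k, h ≤ k → k < N → ν k = 2 * ν (k + 1) + b (k + 1))
    (hb : ∀ j, h < j → j ≤ N → ‖b j‖ ≤ M j) :
    ∀ k, h ≤ k → k ≤ N → ‖ν k‖ ≤ M k := by
  intro k hk
  induction k, hk using Int.leInduction with
  | base => exact fun _ => hν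
  | succ k hk ih =>
    intro hkN
    have hsucc : ν (k + 1) = (ν k - b (k + 1)) / 2 := by
      rw [hrec k hk (by omega)]; ring
    calc ‖ν (k + 1)‖ = ‖ν k - b (k + 1)‖ / 2 := by rw [hsucc, norm_div, RCLike.norm_two]
      _ ≤ (M k + M (k + 1)) / 2 := by
        gcongr
        exact (norm_sub_le _ _).trans (add_le_add (ih (by omega)) (hb _ (by omega) hkN))
      _ ≤ M (k + 1) := by linarith [hM (Int.le_add_one le_rfl : k ≤ k + 1)]

theorem monotone_mul_two_rpow_mul {K θ : ℝ} (hK : 0 ≤ K) (hθ : 0 ≤ θ) :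
    Monotone fun k : ℤ => K * (2 : ℝ) ^ (θ * k) := fun _ _ hkl =>
  mul_le_mul_of_nonneg_left
    (Real.rpow_le_rpow_of_exponent_le one_le_two
      (mul_le_mul_of_nonneg_left (Int.cast_le.mpr hkl) hθ)) hK

/-- **Fine tuning of the chemical potential counterterm.** Given `θ > 0`, an infrared
scale `h ≤ 0`, `K ≥ 0`, and a beta function `b` with `|b_j| ≤ K 2^{θj}` for `h ≤ j ≤ 0`,
there is an initial datum `ν₀` with `|ν₀| ≤ K` such that the backward recursion
`ν_k = 2ν_{k+1} + b_{k+1}` produces a flow satisfying `|ν_k| ≤ K 2^{θk}` for all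
`h ≤ k ≤ 0`. -/
theorem chemical_potential_flow (θ : ℝ) (hθ : 0 < θ) (h : ℤ) (hh : h ≤ 0)
    (K : ℝ) (hK : 0 ≤ K) (b : ℤ → ℂ)
    (hb : ∀ j : ℤ, h ≤ j → j ≤ 0 → ‖b j‖ ≤ K * (2 : ℝ) ^ (θ * (j : ℝ))) :
    ∃ ν : ℤ → ℂ, ‖ν 0‖ ≤ K ∧
      (∀ k : ℤ, h ≤ k → k ≤ -1 → ν k = 2 * ν (k + 1) + b (k + 1)) ∧
      (∀ k : ℤ, h ≤ k → k ≤ 0 → ‖ν k‖ ≤ K * (2 : ℝ) ^ (θ * (k : ℝ))) := by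
  have hrec : ∀ k : ℤ, h ≤ k → k ≤ -1 →
      fineTunedFlow b h k = 2 * fineTunedFlow b h (k + 1) + b (k + 1) :=
    fun k hk _ => fineTunedFlow_eq_two_mul_succ_add b h hk
  have hbound := norm_le_of_eq_two_mul_succ_add (N := 0) (monotone_mul_two_rpow_mul hK hθ.le)
    (by rw [fineTunedFlow_self, norm_zero]; positivity) (fun k hk hk0 => hrec k hk (by omega))
    (fun j hj hj0 => hb j hj.le hj0)
  refine ⟨fineTunedFlow b h, ?_, hrec, hbound⟩
  simpa using hbound 0 hh le_rfl
end

section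
/- Let L ≥ 1 be a natural number, f : ZMod L → ℂ, and define the discrete derivative (∂f)(k) := f(k+1) − f(k) on ZMod L. Let x ∈ ℤ be such that exp(2πi·x/L) ≠ 1 (the exponential exp(−2πi·k·x/L) is well defined for k ∈ ZMod L). Then for every n ∈ ℕ: |Σ_{k ∈ ZMod L} exp(−2πi·k·x/L)·f(k)| ≤ |1 − exp(2πi·x/L)|^{−n} · Σ_{k ∈ ZMod L} |(∂ⁿ f)(k)|, where ∂ⁿ denotes the n-fold discrete derivative. -/
/-!
Twisting `f` by the character `ψ k = exp(-2πi k x / L)` of `ZMod L`, a shift of the summation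
variable turns `∑ ψ k * Δf k` into `(ψ (-1) - 1) * ∑ ψ k * f k`. Iterating `n` times and bounding
the remaining sum by the triangle inequality, using `‖ψ k‖ = 1`, gives the estimate.
-/

namespace AddChar

variable {G : Type*} [AddCommGroup G] [Fintype G]

theorem sum_mul_fwdDiff {R : Type*} [CommRing R] (ψ : AddChar G R) (a : G) (g : G → R) :
    ∑ k, ψ k * fwdDiff a g k = (ψ (-a) - 1) * ∑ k, ψ k * g k := by
  have shift : ∑ k, ψ k * g (k + a) = ∑ k, ψ (-a) * ψ k * g k :=
    Fintype.sum_equiv (Equiv.addRight a) _ _ fun k => by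
      simp [← map_add_eq_mul, mul_comm (ψ (-a))]
  simp only [fwdDiff, mul_sub, Finset.sum_sub_distrib, shift, Finset.mul_sum, sub_mul, one_mul,
    mul_assoc]

theorem sum_mul_eq_inv_pow_mul_sum_mul_fwdDiff_iter {K : Type*} [Field K] (ψ : AddChar G K)
    {a : G} (ha : ψ (-a) ≠ 1) (n : ℕ) (g : G → K) :
    ∑ k, ψ k * g k = (ψ (-a) - 1)⁻¹ ^ n * ∑ k, ψ k * (fwdDiff a)^[n] g k := by
  induction n generalizing g with
  | zero => simp
  | succ n ih =>
    rw [Function.iterate_succ_apply, pow_succ', mul_assoc, ← ih, sum_mul_fwdDiff,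
      inv_mul_cancel_left₀ (sub_ne_zero.mpr ha)]

theorem norm_sum_mul_le {K : Type*} [NormedField K] (ψ : AddChar G K) {a : G}
    (ha : ψ (-a) ≠ 1) (n : ℕ) (g : G → K) :
    ‖∑ k, ψ k * g k‖ ≤ ‖ψ (-a) - 1‖⁻¹ ^ n * ∑ k, ‖(fwdDiff a)^[n] g k‖ := by
  rw [sum_mul_eq_inv_pow_mul_sum_mul_fwdDiff_iter ψ ha n, norm_mul, norm_pow, norm_inv]
  gcongr
  refine (norm_sum_le _ _).trans_eq (Finset.sum_congr rfl fun k _ => ?_)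
  rw [norm_mul, ψ.norm_apply, one_mul]

end AddChar

/-- **Discrete summation by parts on `ZMod L`.** For `f : ZMod L → ℂ`, the discrete
derivative `(∂f)(k) = f(k+1) - f(k)`, and `x ∈ ℤ` with `e^{2πix/L} ≠ 1`, one has, for
every `n`, `|Σ_k e^{-2πi k x/L} f(k)| ≤ |1 - e^{2πix/L}|^{-n} Σ_k |(∂ⁿf)(k)|`. -/
theorem discrete_summation_by_parts (L : ℕ) [NeZero L] (f : ZMod L → ℂ) (x : ℤ)
    (hx : Complex.exp (2 * Real.pi * Complex.I * (x : ℂ) / (L : ℂ)) ≠ 1) :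
    ∀ n : ℕ,
      ‖(∑ k : ZMod L,
          Complex.exp (-(2 * Real.pi * Complex.I * ((k.val : ℕ) : ℂ) * (x : ℂ)) / (L : ℂ))
            * f k)‖
        ≤ (‖(1 - Complex.exp (2 * Real.pi * Complex.I * (x : ℂ) / (L : ℂ)))‖)⁻¹ ^ n *
          ∑ k : ZMod L,
            ‖((fun g : ZMod L → ℂ => fun j => g (j + 1) - g j)^[n] f k)‖ := by
  intro n
  set ψ : AddChar (ZMod L) ℂ := ZMod.stdAddChar.mulShift (-x)
  have hψ_neg_one : ψ (-1) = Complex.exp (2 * Real.pi * Complex.I * x / L) := by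
    rw [AddChar.mulShift_apply, neg_mul_neg, mul_one, ZMod.stdAddChar_coe]
  have hψ_apply (k : ZMod L) :
      ψ k = Complex.exp (-(2 * Real.pi * Complex.I * (k.val : ℕ) * x) / L) := by
    have := ZMod.stdAddChar_coe (N := L) (-x * k.val)
    push_cast [ZMod.natCast_zmod_val] at this
    rw [AddChar.mulShift_apply, this]
    ring_nf
  rw [← hψ_neg_one] at hx ⊢
  simp_rw [← hψ_apply, norm_sub_rev (1 : ℂ)]
  exact ψ.norm_sum_mul_le hx n f
end
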